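/- Let n, l₀, i be natural numbers with l₀ ≥ 1, i ≥ 1 and i·l₀ ≤ n, let δ ∈ [0,1] be real, and let A be a family of l₀-element subsets of [n] with |A| ≥ (1 − δ)·C(n, l₀). Then |Ext(A, i·l₀)| ≥ (1 − δ^i)·C(n, i·l₀). -/

import Mathlib

/-!
Let `𝒩` be the family of `i l₀`-subsets of `[n]` containing no member of `A`. Its
`(i - 1) l₀`-fold shadow is disjoint from `A`, so it has at most `δ C(n, l₀)` members. Pick a
real `x` with `C(x, l₀) = δ C(n, l₀)`. Lovász's real-valued form of the Kruskal–Katona theorem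
gives `|𝒩| ≤ C(x, i l₀)`, and splitting the falling factorial `x (x - 1) ⋯ (x - i l₀ + 1)` into
`i` blocks of length `l₀` gives `C(x, i l₀) / C(n, i l₀) ≤ (C(x, l₀) / C(n, l₀)) ^ i = δ ^ i`.

Lovász's bound reduces, by Kruskal–Katona, to colex initial segments. For those it follows by
induction on the size of the generating set `s`: removing the maximum `M` of `s` gives
`|initSeg s| = C(M, |s|) + |initSeg (s \ {M})|`, and the induction hypothesis is fed with the
real `y` for which `C(y, ·)` is the size of the smaller segment.
-/

open Finset

open scoped Nat FinsetFamily

/-- The `l`-extension of a family `A` inside the space `[n] = {1, …, n}`: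
all `l`-element subsets of `[n]` containing some member of `A`. -/
def extFam (n : ℕ) (A : Finset (Finset ℕ)) (l : ℕ) : Finset (Finset ℕ) :=
  ((Finset.Icc 1 n).powersetCard l).filter (fun t => ∃ s ∈ A, s ⊆ t)

section RealChoose

open Polynomial

noncomputable def realChoose (x : ℝ) (m : ℕ) : ℝ := (descPochhammer ℝ m).eval x / m !

lemma realChoose_natCast (k m : ℕ) : realChoose k m = k.choose m :=
  (Nat.cast_choose_eq_descPochhammer_div ℝ k m).symm

lemma realChoose_zero_right (x : ℝ) : realChoose x 0 = 1 := by simp [realChoose]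

lemma realChoose_succ_right (x : ℝ) (m : ℕ) :
    realChoose x (m + 1) = realChoose x m * (x - m) / (m + 1) := by
  rw [realChoose, realChoose, descPochhammer_succ_eval, Nat.factorial_succ]
  push_cast
  field_simp

lemma realChoose_succ_succ (x : ℝ) (m : ℕ) :
    realChoose (x + 1) (m + 1) = realChoose x m + realChoose x (m + 1) := by
  have h : realChoose (x + 1) (m + 1) = realChoose x m * (x + 1) / (m + 1) := by
    rw [realChoose, realChoose, descPochhammer_succ_left, Nat.factorial_succ]
    simp only [eval_mul, eval_X, eval_comp, eval_sub, eval_one, add_sub_cancel_right]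
    push_cast
    field_simp
  rw [h, realChoose_succ_right]
  field_simp
  ring

lemma realChoose_nonneg {x : ℝ} {m : ℕ} (h : (m : ℝ) - 1 ≤ x) : 0 ≤ realChoose x m :=
  div_nonneg (descPochhammer_nonneg h) (by positivity)

lemma realChoose_pos {x : ℝ} {m : ℕ} (h : (m : ℝ) - 1 < x) : 0 < realChoose x m :=
  div_pos (descPochhammer_pos h) (by positivity)

lemma continuous_realChoose (m : ℕ) : Continuous (realChoose · m) :=
  continuous_descPochhammer_eval.div_const _

lemma monotoneOn_realChoose (m : ℕ) : MonotoneOn (realChoose · m) (Set.Ici ((m : ℝ) - 1)) :=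
  fun _ ha _ hb hab ↦ div_le_div_of_nonneg_right (monotoneOn_descPochhammer_eval m ha hb hab)
    (by positivity)

lemma strictMonoOn_realChoose {m : ℕ} (hm : 1 ≤ m) :
    StrictMonoOn (realChoose · m) (Set.Ici ((m : ℝ) - 1)) := by
  obtain ⟨m, rfl⟩ : ∃ k, m = k + 1 := ⟨m - 1, by omega⟩
  intro a ha b hb hab
  rw [Set.mem_Ici, Nat.cast_add_one, add_sub_cancel_right] at ha hb
  simp only [realChoose_succ_right]
  gcongr ?_ / _
  have hmono := monotoneOn_realChoose m (by rw [Set.mem_Ici]; linarith)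
    (by rw [Set.mem_Ici]; linarith) hab.le
  exact mul_lt_mul' hmono (by linarith) (by linarith) (realChoose_pos (by linarith))

lemma convexOn_realChoose (m : ℕ) : ConvexOn ℝ (Set.Ici ((m : ℝ) - 1)) (realChoose · m) := by
  simpa only [realChoose, div_eq_inv_mul, smul_eq_mul] using
    (convexOn_descPochhammer_eval m).smul (c := ((m ! : ℝ))⁻¹) (by positivity)

lemma realChoose_add_le {m : ℕ} {K t : ℝ} (hK : (m : ℝ) ≤ K) (ht₀ : 0 ≤ t) (ht₁ : t ≤ 1) :
    realChoose (K + t) (m + 1) ≤ realChoose K (m + 1) + t * realChoose K m := by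
  have h := (convexOn_realChoose (m + 1)).2 (x := K) (y := K + 1)
    (by rw [Set.mem_Ici]; push_cast; linarith) (by rw [Set.mem_Ici]; push_cast; linarith)
    (sub_nonneg.2 ht₁) ht₀ (by ring)
  simp only [smul_eq_mul, show (1 - t) * K + t * (K + 1) = K + t by ring,
    realChoose_succ_succ] at h
  linarith

lemma exists_realChoose_eq {a b v : ℝ} (m : ℕ) (hab : a ≤ b) (ha : realChoose a m ≤ v)
    (hb : v ≤ realChoose b m) : ∃ x ∈ Set.Icc a b, realChoose x m = v :=
  intermediate_value_Icc hab (continuous_realChoose m).continuousOn ⟨ha, hb⟩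

lemma descPochhammer_eval_sub_mul_le {l : ℕ} {x y c : ℝ} (hc : 0 ≤ c) (hx : (l : ℝ) - 1 ≤ x - c)
    (hxy : x ≤ y) :
    (descPochhammer ℝ l).eval (x - c) * (descPochhammer ℝ l).eval y ≤
      (descPochhammer ℝ l).eval x * (descPochhammer ℝ l).eval (y - c) := by
  simp only [descPochhammer_eval_eq_prod_range, ← prod_mul_distrib]
  refine prod_le_prod (fun j hj ↦ ?_) (fun j hj ↦ ?_)
  all_goals have hj : (j : ℝ) + 1 ≤ l := by exact_mod_cast mem_range.1 hj
  · exact mul_nonneg (by linarith) (by linarith)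
  · nlinarith [mul_le_mul_of_nonneg_left hxy hc]

lemma descPochhammer_eval_mul_pow_le (k l : ℕ) {x y : ℝ} (hx : ((k * l : ℕ) : ℝ) - 1 ≤ x)
    (hxy : x ≤ y) :
    (descPochhammer ℝ (k * l)).eval x * (descPochhammer ℝ l).eval y ^ k ≤
      (descPochhammer ℝ l).eval x ^ k * (descPochhammer ℝ (k * l)).eval y := by
  induction k with
  | zero => simp
  | succ k ih =>
    have hkl : ((k * l : ℕ) : ℝ) + l - 1 ≤ x := by push_cast at hx ⊢; linarith [Nat.succ_mul k l]
    have hsplit (z : ℝ) : (descPochhammer ℝ ((k + 1) * l)).eval z =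
        (descPochhammer ℝ (k * l)).eval z * (descPochhammer ℝ l).eval (z - (k * l : ℕ)) := by
      rw [Nat.succ_mul, ← descPochhammer_mul, eval_mul, eval_comp, eval_sub, eval_X,
        eval_natCast]
    have hl : (l : ℝ) - 1 ≤ x := by linarith [Nat.cast_nonneg (α := ℝ) (k * l)]
    calc (descPochhammer ℝ ((k + 1) * l)).eval x * (descPochhammer ℝ l).eval y ^ (k + 1)
        = ((descPochhammer ℝ (k * l)).eval x * (descPochhammer ℝ l).eval y ^ k) *
          ((descPochhammer ℝ l).eval (x - (k * l : ℕ)) * (descPochhammer ℝ l).eval y) := by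
          rw [hsplit]; ring
      _ ≤ ((descPochhammer ℝ l).eval x ^ k * (descPochhammer ℝ (k * l)).eval y) *
          ((descPochhammer ℝ l).eval x * (descPochhammer ℝ l).eval (y - (k * l : ℕ))) := by
          refine mul_le_mul (ih (by linarith)) (descPochhammer_eval_sub_mul_le (by positivity)
            (by linarith) hxy) (mul_nonneg (descPochhammer_nonneg (by linarith))
            (descPochhammer_nonneg (by linarith)))
            (mul_nonneg (pow_nonneg (descPochhammer_nonneg hl) _)
            (descPochhammer_nonneg (by linarith)))
      _ = (descPochhammer ℝ l).eval x ^ (k + 1) * (descPochhammer ℝ ((k + 1) * l)).eval y := by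
          rw [hsplit]; ring

lemma realChoose_mul_pow_le (k l : ℕ) {x y : ℝ} (hx : ((k * l : ℕ) : ℝ) - 1 ≤ x) (hxy : x ≤ y) :
    realChoose x (k * l) * realChoose y l ^ k ≤ realChoose x l ^ k * realChoose y (k * l) := by
  simp only [realChoose, div_pow, div_mul_div_comm, mul_comm ((k * l) ! : ℝ)]
  exact div_le_div_of_nonneg_right (descPochhammer_eval_mul_pow_le k l hx hxy) (by positivity)

lemma realChoose_add_le_of_eq {p : ℕ} {K y x : ℝ} (hK : (p : ℝ) + 1 ≤ K) (hy : (p : ℝ) ≤ y)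
    (hyK : y ≤ K) (hKx : K ≤ x) (hxK : x ≤ K + 1)
    (heq : realChoose x (p + 1) = realChoose K (p + 1) + realChoose y p) :
    realChoose K (p + 2) + realChoose y (p + 1) ≤ realChoose x (p + 2) := by
  have hmono := monotoneOn_realChoose (p + 1)
  have hstrict := strictMonoOn_realChoose (m := p + 1) (by omega)
  simp only [Nat.cast_add_one, add_sub_cancel_right] at hmono hstrict
  have hy_succ : y + 1 ≤ x := by
    refine (hstrict.le_iff_le (by rw [Set.mem_Ici]; linarith) (by rw [Set.mem_Ici]; linarith)).1 ?_
    rw [realChoose_succ_succ, heq, add_comm]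
    gcongr
    exact hmono (by rw [Set.mem_Ici]; linarith) (by rw [Set.mem_Ici]; linarith) hyK
  have hchord : realChoose y p ≤ (x - K) * realChoose K p := by
    have h := realChoose_add_le (K := K) (m := p) (t := x - K) (by linarith) (by linarith)
      (by linarith)
    rw [add_sub_cancel, heq] at h
    linarith
  have hK₁ : realChoose K (p + 1) * (p + 1) = realChoose K p * (K - p) := by
    rw [realChoose_succ_right]; field_simp
  have hB₂ := realChoose_nonneg (x := y) (m := p) (by linarith)
  -- The gap below is `(K - p)` times the chord bound plus two nonnegative terms.
  have key : realChoose K (p + 1) * (K - p - 1) * (p + 1) + realChoose y p * (y - p) * (p + 2)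
      ≤ (realChoose K (p + 1) + realChoose y p) * (x - p - 1) * (p + 1) := by
    nlinarith [hK₁, mul_le_mul_of_nonneg_left hchord (by linarith : (0 : ℝ) ≤ K - p),
      mul_nonneg hB₂ (by linarith : (0 : ℝ) ≤ K - y),
      mul_nonneg hB₂ (by linarith : (0 : ℝ) ≤ x - y - 1)]
  rw [realChoose_succ_right x (p + 1), realChoose_succ_right K (p + 1), realChoose_succ_right y p,
    heq, div_add_div _ _ (by positivity) (by positivity), div_le_div_iff₀ (by positivity)
    (by positivity)]
  push_cast
  nlinarith [key]

theorem realChoose_add_le_of_add_le {q : ℕ} {K y x : ℝ} (hK : (q : ℝ) + 1 ≤ K)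
    (hy : (q : ℝ) ≤ y) (hyK : y ≤ K) (hx : (q : ℝ) + 1 ≤ x)
    (h : realChoose K (q + 1) + realChoose y q ≤ realChoose x (q + 1)) :
    realChoose K (q + 2) + realChoose y (q + 1) ≤ realChoose x (q + 2) := by
  have hmono := monotoneOn_realChoose q
  obtain ⟨x₀, ⟨hKx₀, hx₀K⟩, hx₀⟩ := exists_realChoose_eq (a := K) (b := K + 1)
    (v := realChoose K (q + 1) + realChoose y q) (q + 1) (by linarith)
    (le_add_of_nonneg_right (realChoose_nonneg (by linarith)))
    (by rw [realChoose_succ_succ, add_comm]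
        gcongr
        exact hmono (by rw [Set.mem_Ici]; linarith) (by rw [Set.mem_Ici]; linarith) hyK)
  have hx₀x : x₀ ≤ x := by
    have hstrict := strictMonoOn_realChoose (m := q + 1) (by omega)
    simp only [Nat.cast_add_one, add_sub_cancel_right] at hstrict
    exact (hstrict.le_iff_le (by rw [Set.mem_Ici]; linarith) (by rw [Set.mem_Ici]; linarith)).1
      (hx₀ ▸ h)
  calc realChoose K (q + 2) + realChoose y (q + 1)
      ≤ realChoose x₀ (q + 2) := realChoose_add_le_of_eq hK hy hyK hKx₀ hx₀K hx₀
    _ ≤ realChoose x (q + 2) := monotoneOn_realChoose (q + 2)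
        (by rw [Set.mem_Ici]; push_cast; linarith) (by rw [Set.mem_Ici]; push_cast; linarith) hx₀x

end RealChoose

namespace Finset.Colex

variable {n : ℕ}

lemma card_initSeg_le_choose {s : Finset (Fin n)} {a : Fin n} (hs : ∀ b ∈ s, b < a) :
    #(initSeg s) ≤ (a : ℕ).choose #s :=
  calc #(initSeg s) ≤ #((Iio a).powersetCard #s) := card_le_card fun t ht ↦ by
        rw [mem_initSeg] at ht
        exact mem_powersetCard.2
          ⟨fun b hb ↦ mem_Iio.2 (forall_lt_mono ht.2 hs b hb), ht.1.symm⟩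
    _ = (a : ℕ).choose #s := by rw [card_powersetCard, Fin.card_Iio]

lemma initSeg_filter_notMem_max' {s : Finset (Fin n)} (hs : s.Nonempty) :
    (initSeg s).filter (s.max' hs ∉ ·) = (Iio (s.max' hs)).powersetCard #s := by
  ext t
  simp only [mem_filter, mem_initSeg, mem_powersetCard]
  constructor
  · rintro ⟨⟨hcard, hts⟩, hM⟩
    refine ⟨fun b hb ↦ mem_Iio.2 (lt_of_le_of_ne ?_ (ne_of_mem_of_not_mem hb hM)), hcard.symm⟩
    exact forall_le_mono hts (fun b hb ↦ s.le_max' b hb) b hb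
  · rintro ⟨hts, hcard⟩
    have hM : s.max' hs ∉ t := fun h ↦ lt_irrefl _ (mem_Iio.1 (hts h))
    refine ⟨⟨hcard.symm, ?_⟩, hM⟩
    obtain rfl | hne := eq_or_ne t s
    · exact le_rfl
    · exact (toColex_lt_toColex_iff_exists_forall_lt.2
        ⟨s.max' hs, s.max'_mem hs, hM, fun b hb _ ↦ mem_Iio.1 (hts hb)⟩).le

lemma card_initSeg_filter_mem_max' {s : Finset (Fin n)} (hs : s.Nonempty) :
    #((initSeg s).filter (s.max' hs ∈ ·)) = #(initSeg (s.erase (s.max' hs))) := by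
  set M := s.max' hs
  have hMs : {M} ⊆ s := singleton_subset_iff.2 (s.max'_mem hs)
  have hlt : ∀ u ∈ initSeg (s.erase M), ∀ b ∈ u, b < M := fun u hu ↦
    forall_lt_mono (mem_initSeg.1 hu).2 fun b hb ↦ s.lt_max'_of_mem_erase_max' hs hb
  refine card_nbij' (·.erase M) (insert M) (fun t ht ↦ ?_) (fun u hu ↦ ?_) (fun t ht ↦ ?_)
    (fun u hu ↦ erase_insert fun h ↦ lt_irrefl _ (hlt u hu M h))
  · rw [mem_coe, mem_filter, mem_initSeg] at ht
    obtain ⟨⟨hcard, hts⟩, hMt⟩ := ht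
    dsimp only
    rw [mem_coe, mem_initSeg, card_erase_of_mem hMt, card_erase_of_mem (s.max'_mem hs), hcard,
      erase_eq, erase_eq, toColex_sdiff_le_toColex_sdiff (singleton_subset_iff.2 hMt) hMs]
    exact ⟨rfl, hts⟩
  · have hMu : M ∉ u := fun h ↦ lt_irrefl _ (hlt u hu M h)
    rw [mem_coe, mem_initSeg] at hu
    rw [mem_coe, mem_filter, mem_initSeg]
    refine ⟨?_, mem_insert_self M u⟩
    refine ⟨by rw [card_insert_of_notMem hMu, ← hu.1, card_erase_add_one (s.max'_mem hs)], ?_⟩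
    rw [← toColex_sdiff_le_toColex_sdiff (singleton_subset_iff.2 (mem_insert_self M u)) hMs,
      ← erase_eq, erase_insert hMu, ← erase_eq]
    exact hu.2
  · exact insert_erase (mem_filter.1 ht).2

lemma card_initSeg {s : Finset (Fin n)} (hs : s.Nonempty) :
    #(initSeg s) = (s.max' hs : ℕ).choose #s + #(initSeg (s.erase (s.max' hs))) := by
  rw [← card_filter_add_card_filter_not (s.max' hs ∈ ·), card_initSeg_filter_mem_max',
    initSeg_filter_notMem_max', card_powersetCard, Fin.card_Iio, add_comm]

lemma exists_isInitSeg_card {r m : ℕ} (hm : m ≤ n.choose r) :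
    ∃ 𝒞 : Finset (Finset (Fin n)), IsInitSeg 𝒞 r ∧ #𝒞 = m := by
  induction m with
  | zero => exact ⟨∅, isInitSeg_empty, rfl⟩
  | succ m ih =>
    obtain ⟨𝒞, h𝒞, hcard⟩ := ih (by omega)
    have hne : (univ.powersetCard r \ 𝒞).Nonempty := by
      rw [sdiff_nonempty]
      intro h
      have := card_le_card h
      rw [card_powersetCard, card_univ, Fintype.card_fin] at this
      omega
    obtain ⟨u, hu, hmin⟩ := exists_min_image _ toColex hne
    rw [mem_sdiff, mem_powersetCard_univ] at hu
    refine ⟨insert u 𝒞, ⟨?_, ?_⟩, by rw [card_insert_of_notMem hu.2, hcard]⟩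
    · rw [coe_insert]
      rintro v (rfl | hv)
      exacts [hu.1, h𝒞.1 hv]
    · rintro v w hv ⟨hwv, hw⟩
      refine mem_insert.2 (or_iff_not_imp_left.2 fun hwu ↦ ?_)
      rcases mem_insert.1 hv with rfl | hv
      · by_contra hw𝒞
        exact (hmin w (mem_sdiff.2 ⟨mem_powersetCard_univ.2 hw, hw𝒞⟩)).not_gt hwv
      · exact h𝒞.2 hv ⟨hwv, hw⟩

lemma card_initSeg_le_realChoose_of_erase_max' {s : Finset (Fin n)} (hs : s.Nonempty) {q : ℕ}
    (hcard : #s = q + 2) {x y : ℝ} (hy : (q : ℝ) ≤ y) (hyM : y ≤ (s.max' hs : ℕ))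
    (hx : (q : ℝ) + 1 ≤ x) (hshadow : #(initSeg (s.erase (s.min' hs))) ≤ realChoose x (q + 1))
    (hlow : realChoose y q ≤ #(initSeg ((s.erase (s.max' hs)).erase (s.min' hs))))
    (hup : #(initSeg (s.erase (s.max' hs))) ≤ realChoose y (q + 1)) :
    #(initSeg s) ≤ realChoose x (q + 2) := by
  set M := s.max' hs
  set K : ℕ := (M : ℕ)
  have hmM : s.min' hs < M := s.min'_lt_max'_of_card (by omega)
  have hMt : M ∈ s.erase (s.min' hs) := mem_erase.2 ⟨hmM.ne', s.max'_mem hs⟩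
  have ht : (s.erase (s.min' hs)).Nonempty := ⟨M, hMt⟩
  have htM : (s.erase (s.min' hs)).max' ht = M :=
    le_antisymm ((s.erase _).max'_le _ _ fun b hb ↦ s.le_max' b (mem_of_mem_erase hb))
    ((s.erase _).le_max' M hMt)
  have hK : q + 1 ≤ K := by
    have := card_le_card (show s.erase M ⊆ Iio M from fun b hb ↦
      mem_Iio.2 (s.lt_max'_of_mem_erase_max' hs hb))
    rw [card_erase_of_mem (s.max'_mem hs), Fin.card_Iio, hcard] at this
    omega
  have hshadow_eq := card_initSeg ht
  rw [htM, card_erase_of_mem (s.min'_mem hs), hcard, erase_right_comm] at hshadow_eq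
  have hsum : realChoose K (q + 1) + realChoose y q ≤ realChoose x (q + 1) := by
    rw [realChoose_natCast]
    push_cast [hshadow_eq] at hshadow
    linarith
  have hstep := realChoose_add_le_of_add_le (by exact_mod_cast hK) hy hyM hx hsum
  rw [card_initSeg hs, hcard]
  push_cast
  rw [← realChoose_natCast]
  linarith

theorem card_initSeg_le_realChoose {q : ℕ} (hq : 1 ≤ q) {s : Finset (Fin n)} (hs : s.Nonempty)
    (hcard : #s = q + 1) {x : ℝ} (hx : (q : ℝ) ≤ x)
    (h : #(initSeg (s.erase (s.min' hs))) ≤ realChoose x q) :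
    #(initSeg s) ≤ realChoose x (q + 1) := by
  induction q, hq using Nat.le_induction generalizing s x with
  | base =>
    have hup := card_initSeg_le_choose fun b hb ↦ s.lt_max'_of_mem_erase_max' hs hb
    rw [card_erase_of_mem (s.max'_mem hs), hcard, Nat.choose_one_right] at hup
    refine card_initSeg_le_realChoose_of_erase_max' hs hcard (y := (s.max' hs : ℕ)) (by simp)
      le_rfl (by push_cast at hx ⊢; linarith) h ?_ ?_
    · rw [realChoose_zero_right, Nat.one_le_cast]
      exact card_pos.2 initSeg_nonempty
    · rw [realChoose_natCast, Nat.choose_one_right]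
      exact_mod_cast hup
  | succ q hq ih =>
    set M := s.max' hs
    have hs' : (s.erase M).Nonempty :=
      ⟨s.min' hs, mem_erase.2 ⟨(s.min'_lt_max'_of_card (by omega)).ne, s.min'_mem hs⟩⟩
    have hs'card : #(s.erase M) = q + 1 := by rw [card_erase_of_mem (s.max'_mem hs), hcard]; rfl
    have hmin : (s.erase M).min' hs' = s.min' hs :=
      le_antisymm ((s.erase M).min'_le _ (mem_erase.2 ⟨(s.min'_lt_max'_of_card (by omega)).ne,
        s.min'_mem hs⟩)) (min'_subset hs' (erase_subset M s))
    have hup : #(initSeg ((s.erase M).erase (s.min' hs))) ≤ realChoose (M : ℕ) q := by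
      have := card_initSeg_le_choose (s := (s.erase M).erase (s.min' hs)) (a := M) fun b hb ↦
        s.lt_max'_of_mem_erase_max' hs (mem_of_mem_erase hb)
      rw [card_erase_of_mem (hmin ▸ min'_mem _ hs'), hs'card, add_tsub_cancel_right] at this
      rw [realChoose_natCast]
      exact_mod_cast this
    obtain ⟨y, ⟨hqy, hyM⟩, hy⟩ := exists_realChoose_eq q (a := q) (b := (M : ℕ))
      (by have := hs'card ▸ card_le_card (show s.erase M ⊆ Iio M from fun b hb ↦
            mem_Iio.2 (s.lt_max'_of_mem_erase_max' hs hb))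
          rw [Fin.card_Iio] at this
          exact_mod_cast (by omega : q ≤ (M : ℕ)))
      (by rw [realChoose_natCast, Nat.choose_self, Nat.cast_one, Nat.one_le_cast]
          exact card_pos.2 initSeg_nonempty) hup
    refine card_initSeg_le_realChoose_of_erase_max' hs hcard hqy hyM (by push_cast at hx; linarith)
      h hy.le (ih hs' hs'card hqy ?_)
    rw [hmin, hy]

end Finset.Colex

open Finset.Colex

namespace Finset

theorem card_le_realChoose_of_card_shadow_le_fin {n q : ℕ} {𝒜 : Finset (Finset (Fin n))}
    (hq : 1 ≤ q) (h𝒜 : (𝒜 : Set (Finset (Fin n))).Sized (q + 1)) {x : ℝ} (hx : (q : ℝ) ≤ x)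
    (h : #(∂ 𝒜) ≤ realChoose x q) : #𝒜 ≤ realChoose x (q + 1) := by
  obtain ⟨𝒞, h𝒞, hcard⟩ := exists_isInitSeg_card (m := #𝒜) (by simpa using h𝒜.card_le)
  obtain rfl | h𝒞₀ := 𝒞.eq_empty_or_nonempty
  · rw [← hcard, card_empty, Nat.cast_zero]
    exact realChoose_nonneg (by push_cast; linarith)
  obtain ⟨s, hs, rfl⟩ := h𝒞.exists_initSeg h𝒞₀
  have hs₀ : s.Nonempty := card_pos.1 (by omega)
  have hkk := kruskal_katona h𝒜 hcard.le h𝒞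
  rw [shadow_initSeg hs₀] at hkk
  rw [← hcard]
  exact card_initSeg_le_realChoose hq hs₀ hs hx (le_trans (by exact_mod_cast hkk) h)

lemma shadow_map {α β : Type*} [DecidableEq α] [DecidableEq β] (e : α ↪ β)
    (𝒜 : Finset (Finset α)) :
    ∂ (𝒜.map (mapEmbedding e).toEmbedding) = (∂ 𝒜).map (mapEmbedding e).toEmbedding := by
  ext t
  simp only [mem_shadow_iff, mem_map, RelEmbedding.coe_toEmbedding, mapEmbedding_apply]
  constructor
  · rintro ⟨_, ⟨s, hs, rfl⟩, _, hb, rfl⟩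
    obtain ⟨a, ha, rfl⟩ := mem_map.1 hb
    exact ⟨s.erase a, ⟨s, hs, a, ha, rfl⟩, map_erase e s a⟩
  · rintro ⟨_, ⟨s, hs, a, ha, rfl⟩, rfl⟩
    exact ⟨s.map e, ⟨s, hs, rfl⟩, e a, mem_map_of_mem e ha, (map_erase e s a).symm⟩

lemma exists_fin_map_eq {α : Type*} [DecidableEq α] (𝒜 : Finset (Finset α)) :
    ∃ (m : ℕ) (e : Fin m ↪ α) (𝒜' : Finset (Finset (Fin m))),
      𝒜'.map (mapEmbedding e).toEmbedding = 𝒜 := by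
  set U := 𝒜.sup id
  let e : Fin #U ↪ α := U.equivFin.symm.toEmbedding.trans (Function.Embedding.subtype _)
  have hU : ∀ s ∈ 𝒜, s ⊆ univ.map e := fun s hs a ha ↦ mem_map.2
    ⟨U.equivFin ⟨a, le_sup (f := id) hs ha⟩, mem_univ _, by simp [e]⟩
  refine ⟨#U, e, univ.filter (·.map e ∈ 𝒜), ?_⟩
  ext s
  simp only [mem_map, mem_filter, mem_univ, true_and, RelEmbedding.coe_toEmbedding,
    mapEmbedding_apply]
  refine ⟨fun ⟨t, ht, hts⟩ ↦ hts ▸ ht, fun hs ↦ ?_⟩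
  obtain ⟨t, -, rfl⟩ := subset_map_iff.1 (hU s hs)
  exact ⟨t, hs, rfl⟩

theorem card_le_realChoose_of_card_shadow_le {α : Type*} [DecidableEq α] {q : ℕ}
    {𝒜 : Finset (Finset α)} (hq : 1 ≤ q) (h𝒜 : (𝒜 : Set (Finset α)).Sized (q + 1)) {x : ℝ}
    (hx : (q : ℝ) ≤ x) (h : #(∂ 𝒜) ≤ realChoose x q) : #𝒜 ≤ realChoose x (q + 1) := by
  obtain ⟨m, e, 𝒜, rfl⟩ := exists_fin_map_eq 𝒜
  rw [shadow_map, card_map] at h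
  rw [card_map]
  refine card_le_realChoose_of_card_shadow_le_fin hq (fun t ht ↦ ?_) hx h
  simpa using h𝒜 (mem_map_of_mem _ ht)

theorem card_le_realChoose_of_card_shadow_iterate_le {α : Type*} [DecidableEq α] {l d : ℕ}
    {𝒜 : Finset (Finset α)} (hl : 1 ≤ l) (h𝒜 : (𝒜 : Set (Finset α)).Sized (l + d)) {x : ℝ}
    (hx : (l : ℝ) + d - 1 ≤ x) (h : #(∂^[d] 𝒜) ≤ realChoose x l) :
    #𝒜 ≤ realChoose x (l + d) := by
  induction d generalizing 𝒜 with
  | zero => simpa using h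
  | succ d ih =>
    rw [Function.iterate_succ_apply] at h
    rw [← add_assoc] at h𝒜 ⊢
    refine card_le_realChoose_of_card_shadow_le (q := l + d) (by omega) h𝒜
      (by push_cast at hx ⊢; linarith)
      (ih (by simpa using h𝒜.shadow) (by push_cast at hx; linarith) h)

lemma choose_le_card_shadow_iterate {α : Type*} [DecidableEq α] {l d : ℕ}
    {𝒜 : Finset (Finset α)} (h𝒜 : (𝒜 : Set (Finset α)).Sized (l + d)) {t : Finset α}
    (ht : t ∈ 𝒜) : (l + d).choose l ≤ #(∂^[d] 𝒜) := by
  rw [← h𝒜 ht, ← card_powersetCard]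
  refine card_le_card fun u hu ↦ mem_shadow_iterate_iff_exists_sdiff.2 ⟨t, ht, ?_⟩
  rw [mem_powersetCard] at hu
  exact ⟨hu.1, by rw [card_sdiff_of_subset hu.1, h𝒜 ht, hu.2]; omega⟩

theorem card_le_pow_mul_choose_of_card_shadow_iterate_le {α : Type*} [DecidableEq α]
    {𝒜 : Finset (Finset α)} {n l k : ℕ} {δ : ℝ} (hl : 1 ≤ l) (hn : (k + 1) * l ≤ n)
    (hδ : δ ≤ 1) (h𝒜 : (𝒜 : Set (Finset α)).Sized ((k + 1) * l))
    (h : #(∂^[k * l] 𝒜) ≤ δ * n.choose l) : #𝒜 ≤ δ ^ (k + 1) * n.choose ((k + 1) * l) := by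
  have hR : (k + 1) * l = l + k * l := by ring
  have hC : (0 : ℝ) < n.choose l := Nat.cast_pos.2 (Nat.choose_pos (by nlinarith))
  obtain rfl | ⟨t, ht⟩ := 𝒜.eq_empty_or_nonempty
  · rw [shadow_iterate_empty, card_empty, Nat.cast_zero] at h
    rw [card_empty, Nat.cast_zero]
    have := nonneg_of_mul_nonneg_left h hC
    positivity
  have hRn : (((k + 1) * l : ℕ) : ℝ) ≤ n := by exact_mod_cast hn
  have hRl : (((k + 1) * l : ℕ) : ℝ) = l + (k * l : ℕ) := by exact_mod_cast hR
  have hlR : (l : ℝ) ≤ ((k + 1) * l : ℕ) := by exact_mod_cast Nat.le_mul_of_pos_left l k.succ_pos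
  rw [hR] at h𝒜
  have hlow := choose_le_card_shadow_iterate h𝒜 ht
  obtain ⟨x, ⟨hRx, hxn⟩, hx⟩ := exists_realChoose_eq l (a := (((k + 1) * l : ℕ) : ℝ) - 1)
    (b := n) (v := δ * n.choose l) (by linarith)
    (calc realChoose ((((k + 1) * l : ℕ) : ℝ) - 1) l ≤ realChoose (((k + 1) * l : ℕ) : ℝ) l :=
          monotoneOn_realChoose l (by rw [Set.mem_Ici]; linarith) (by rw [Set.mem_Ici]; linarith)
            (by linarith)
      _ ≤ δ * n.choose l := by
          rw [realChoose_natCast, hR]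
          exact le_trans (by exact_mod_cast hlow) h)
    (by rw [realChoose_natCast]; nlinarith)
  have hN := card_le_realChoose_of_card_shadow_iterate_le hl h𝒜
    (x := x) (by linarith) (by rw [hx]; exact h)
  have hratio := realChoose_mul_pow_le (k + 1) l hRx hxn
  rw [hx, realChoose_natCast, realChoose_natCast, mul_pow] at hratio
  rw [← hR] at hN
  nlinarith [pow_pos hC (k + 1)]

end Finset

lemma extFam_subset (n : ℕ) (A : Finset (Finset ℕ)) (l : ℕ) :
    extFam n A l ⊆ (Icc 1 n).powersetCard l :=
  filter_subset _ _

lemma shadow_iterate_sdiff_extFam_subset (n : ℕ) (A : Finset (Finset ℕ)) (l d : ℕ) :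
    ∂^[d] ((Icc 1 n).powersetCard (l + d) \ extFam n A (l + d)) ⊆
      (Icc 1 n).powersetCard l \ A := by
  intro u hu
  obtain ⟨t, ht, hut, hcard⟩ := mem_shadow_iterate_iff_exists_sdiff.1 hu
  rw [mem_sdiff, extFam, mem_filter] at ht
  have ht' := mem_powersetCard.1 ht.1
  refine mem_sdiff.2
    ⟨mem_powersetCard.2 ⟨hut.trans ht'.1, ?_⟩, fun huA ↦ ht.2 ⟨ht.1, u, huA, hut⟩⟩
  rw [card_sdiff_of_subset hut, ht'.2] at hcard
  have := card_le_card hut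
  omega

theorem stmt_13_general (n l₀ i : ℕ) (hl₀ : 1 ≤ l₀) (hi : 1 ≤ i) (hin : i * l₀ ≤ n)
    (δ : ℝ) (hδ1 : δ ≤ 1)
    (A : Finset (Finset ℕ)) (hA : A ⊆ (Finset.Icc 1 n).powersetCard l₀)
    (hAcard : (A.card : ℝ) ≥ (1 - δ) * n.choose l₀) :
    ((extFam n A (i * l₀)).card : ℝ) ≥ (1 - δ ^ i) * n.choose (i * l₀) := by
  obtain ⟨k, rfl⟩ : ∃ k, i = k + 1 := ⟨i - 1, by omega⟩
  have hshadow := shadow_iterate_sdiff_extFam_subset n A l₀ (k * l₀)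
  rw [show l₀ + k * l₀ = (k + 1) * l₀ by ring] at hshadow
  have hsplit := card_sdiff_add_card_eq_card (extFam_subset n A ((k + 1) * l₀))
  have hcompl := card_sdiff_add_card_eq_card hA
  rw [card_powersetCard, Nat.card_Icc, add_tsub_cancel_right] at hsplit hcompl
  have hnon := card_le_pow_mul_choose_of_card_shadow_iterate_le hl₀ hin hδ1
    (fun t ht ↦ (mem_powersetCard.1 (mem_sdiff.1 ht).1).2)
    ((Nat.cast_le.2 (card_le_card hshadow)).trans
      (by push_cast [← hcompl] at hAcard ⊢; linarith))
  rw [← hsplit, Nat.cast_add] at hnon ⊢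
  linarith

theorem stmt_13 (n l₀ i : ℕ) (hl₀ : 1 ≤ l₀) (hi : 1 ≤ i) (hin : i * l₀ ≤ n)
    (δ : ℝ) (hδ0 : 0 ≤ δ) (hδ1 : δ ≤ 1)
    (A : Finset (Finset ℕ)) (hA : A ⊆ (Finset.Icc 1 n).powersetCard l₀)
    (hAcard : (A.card : ℝ) ≥ (1 - δ) * n.choose l₀) :
    ((extFam n A (i * l₀)).card : ℝ) ≥ (1 - δ ^ i) * n.choose (i * l₀) :=
  stmt_13_general n l₀ i hl₀ hi hin δ hδ1 A hA hAcard
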